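/- arXiv:1307.1434 — 2 statements merged into one kernel-verified Lean document; each statement's English description precedes it below -/
import Mathlib

section
/- Let T : ℝ³ → ℝ^{3×3} be a smooth tensor field with compact support. If dev sym T(x) = 0 and dev Curl T(x) = 0 for all x ∈ ℝ³, then T ≡ 0. (Triviality of the kernel of the DevSym-DevCurl inequality on compactly supported smooth fields, Section 6.3.) -/
open MeasureTheory Real Matrix

attribute [local instance] Matrix.frobeniusNormedAddCommGroup Matrix.frobeniusNormedSpace

noncomputable section

/-- Deviatoric (trace-free) part of a square matrix. -/
def dev {n : ℕ} (X : Matrix (Fin n) (Fin n) ℝ) : Matrix (Fin n) (Fin n) ℝ :=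
  X - (Matrix.trace X / (n : ℝ)) • (1 : Matrix (Fin n) (Fin n) ℝ)

/-- Symmetric part of a square matrix. -/
def symP {n : ℕ} (X : Matrix (Fin n) (Fin n) ℝ) : Matrix (Fin n) (Fin n) ℝ :=
  (1 / 2 : ℝ) • (X + Xᵀ)

/-- Squared Frobenius norm. -/
def frobSq {n : ℕ} (X : Matrix (Fin n) (Fin n) ℝ) : ℝ := ∑ i, ∑ j, (X i j) ^ 2

/-- Frobenius norm. -/
def frobN {n : ℕ} (X : Matrix (Fin n) (Fin n) ℝ) : ℝ := Real.sqrt (frobSq X)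

/-- Partial derivative ∂ⱼ f at x. -/
def pd {n : ℕ} (j : Fin n) (f : (Fin n → ℝ) → ℝ) (x : Fin n → ℝ) : ℝ :=
  fderiv ℝ f x (Pi.single j 1)

/-- Row-wise divergence of a tensor field: (Div T)ᵢ = Σⱼ ∂ⱼ Tᵢⱼ. -/
def divT {n : ℕ} (T : (Fin n → ℝ) → Matrix (Fin n) (Fin n) ℝ) (x : Fin n → ℝ) :
    Fin n → ℝ :=
  fun i => ∑ j, pd j (fun y => T y i j) x

/-- Row-wise rotation (curl) of a 3×3 tensor field. -/
def curl3 (T : (Fin 3 → ℝ) → Matrix (Fin 3) (Fin 3) ℝ) (x : Fin 3 → ℝ) :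
    Matrix (Fin 3) (Fin 3) ℝ :=
  Matrix.of fun i =>
    ![pd 1 (fun y => T y i 2) x - pd 2 (fun y => T y i 1) x,
      pd 2 (fun y => T y i 0) x - pd 0 (fun y => T y i 2) x,
      pd 0 (fun y => T y i 1) x - pd 1 (fun y => T y i 0) x]

/-- Jacobian matrix of a vector field: (Grad v)ᵢⱼ = ∂ⱼ vᵢ. -/
def gradM {n : ℕ} (v : (Fin n → ℝ) → (Fin n → ℝ)) (x : Fin n → ℝ) :
    Matrix (Fin n) (Fin n) ℝ :=
  Matrix.of fun i j => pd j (fun y => v y i) x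

/-! ### Auxiliary lemmas -/

lemma pd_congr {f g : (Fin 3 → ℝ) → ℝ} (h : ∀ y, f y = g y) (j : Fin 3) (x : Fin 3 → ℝ) :
    pd j f x = pd j g x := by rw [funext h]

lemma pd_neg (g : (Fin 3 → ℝ) → ℝ) (j : Fin 3) (x : Fin 3 → ℝ) :
    pd j (fun y => -g y) x = -pd j g x := by
  simp [pd, fderiv_neg]

lemma pd_smooth {f : (Fin 3 → ℝ) → ℝ} (hf : ContDiff ℝ (⊤ : ℕ∞) f) (j : Fin 3) :
    ContDiff ℝ (⊤ : ℕ∞) (pd j f) :=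
  (hf.fderiv_right (by simp)).clm_apply contDiff_const

lemma pd_compactSupport {f : (Fin 3 → ℝ) → ℝ} (hf : HasCompactSupport f) (j : Fin 3) :
    HasCompactSupport (pd j f) := by
  apply (hf.fderiv ℝ).mono
  intro x hx
  simp only [Function.mem_support, Ne] at hx ⊢
  intro h0
  exact hx (by simp [pd, h0])

lemma pd_comm {f : (Fin 3 → ℝ) → ℝ} (hf : ContDiff ℝ (⊤ : ℕ∞) f) (i j : Fin 3) (x : Fin 3 → ℝ) :
    pd i (pd j f) x = pd j (pd i f) x := by
  have hdf : Differentiable ℝ f := hf.differentiable (by simp)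
  have hdf' : Differentiable ℝ (fderiv ℝ f) :=
    (hf.fderiv_right (m := 1) (by norm_cast)).differentiable (by simp)
  have hsymm := second_derivative_symmetric (f' := fderiv ℝ f) (f'' := fderiv ℝ (fderiv ℝ f) x)
      (fun y => (hdf y).hasFDerivAt) ((hdf' x).hasFDerivAt)
  have key : ∀ v w : Fin 3 → ℝ,
      fderiv ℝ (fun y => fderiv ℝ f y w) x v = fderiv ℝ (fderiv ℝ f) x v w := by
    intro v w
    rw [fderiv_clm_apply (hdf' x) (differentiableAt_const w)]
    simp [ContinuousLinearMap.flip_apply]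
  show fderiv ℝ (fun y => fderiv ℝ f y (Pi.single j 1)) x (Pi.single i 1)
      = fderiv ℝ (fun y => fderiv ℝ f y (Pi.single i 1)) x (Pi.single j 1)
  rw [key, key]
  exact hsymm _ _

lemma zero_of_pd {f : (Fin 3 → ℝ) → ℝ} (hf : Differentiable ℝ f)
    (hsupp : HasCompactSupport f) (h : ∀ x j, pd j f x = 0) (x : Fin 3 → ℝ) : f x = 0 := by
  have hfd : ∀ z, fderiv ℝ f z = 0 := by
    intro z
    ext v
    have hv : v = ∑ j : Fin 3, v j • (Pi.single j (1:ℝ) : Fin 3 → ℝ) := by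
      funext k
      simp [Finset.sum_apply, Pi.single_apply]
    have h0 : ∀ j : Fin 3, fderiv ℝ f z (Pi.single j 1) = 0 := fun j => h z j
    rw [ContinuousLinearMap.zero_apply, hv, map_sum]
    simp [h0]
  obtain ⟨y, hy⟩ : ∃ y, y ∉ tsupport f := by
    by_contra hc
    push_neg at hc
    have huniv : tsupport f = Set.univ := Set.eq_univ_of_forall hc
    exact noncompact_univ (Fin 3 → ℝ) (huniv ▸ hsupp)
  rw [is_const_of_fderiv_eq_zero hf hfd x y, image_eq_zero_of_notMem_tsupport hy]

lemma entry_contDiff {T : (Fin 3 → ℝ) → Matrix (Fin 3) (Fin 3) ℝ} (hT : ContDiff ℝ (⊤ : ℕ∞) T)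
    (i j : Fin 3) : ContDiff ℝ (⊤ : ℕ∞) (fun y => T y i j) :=
  (LinearMap.toContinuousLinearMap
    ({ toFun := fun M => M i j, map_add' := fun _ _ => rfl,
       map_smul' := fun _ _ => rfl } : Matrix (Fin 3) (Fin 3) ℝ →ₗ[ℝ] ℝ)).contDiff.comp hT

lemma entry_supp {T : (Fin 3 → ℝ) → Matrix (Fin 3) (Fin 3) ℝ} (hsupp : HasCompactSupport T)
    (i j : Fin 3) : HasCompactSupport (fun y => T y i j) := by
  apply hsupp.mono
  intro x hx
  simp only [Function.mem_support, Ne] at hx ⊢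
  intro h0
  exact hx (by rw [h0]; rfl)

/-- Triviality of the kernel of the DevSym-DevCurl inequality on compactly supported
smooth fields (Section 6.3). -/
theorem kernel_devSymDevCurl_trivial (T : (Fin 3 → ℝ) → Matrix (Fin 3) (Fin 3) ℝ)
    (hT : ContDiff ℝ (⊤ : ℕ∞) T) (hsupp : HasCompactSupport T)
    (hdevsym : ∀ x, dev (symP (T x)) = 0) (hdevcurl : ∀ x, dev (curl3 T x) = 0) :
    ∀ x, T x = 0 := by
  -- consequences of dev sym T = 0
  have hs01 : ∀ y, T y 0 1 = -T y 1 0 := by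
    intro y
    have h := congrFun (congrFun (hdevsym y) 0) 1
    simp [dev, symP, Matrix.trace, Matrix.diag, Fin.sum_univ_three, Matrix.one_apply] at h
    linarith
  have hs12 : ∀ y, T y 1 2 = -T y 2 1 := by
    intro y
    have h := congrFun (congrFun (hdevsym y) 1) 2
    simp [dev, symP, Matrix.trace, Matrix.diag, Fin.sum_univ_three, Matrix.one_apply] at h
    linarith
  have hs20 : ∀ y, T y 2 0 = -T y 0 2 := by
    intro y
    have h := congrFun (congrFun (hdevsym y) 2) 0
    simp [dev, symP, Matrix.trace, Matrix.diag, Fin.sum_univ_three, Matrix.one_apply] at h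
    linarith
  have hs11 : ∀ y, T y 1 1 = T y 0 0 := by
    intro y
    have h0 := congrFun (congrFun (hdevsym y) 0) 0
    have h1 := congrFun (congrFun (hdevsym y) 1) 1
    simp [dev, symP, Matrix.trace, Matrix.diag, Fin.sum_univ_three, Matrix.one_apply] at h0 h1
    linarith
  have hs22 : ∀ y, T y 2 2 = T y 0 0 := by
    intro y
    have h0 := congrFun (congrFun (hdevsym y) 0) 0
    have h2 := congrFun (congrFun (hdevsym y) 2) 2
    simp [dev, symP, Matrix.trace, Matrix.diag, Fin.sum_univ_three, Matrix.one_apply] at h0 h2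
    linarith
  -- rewriting partial derivatives of entries
  have hp01 : ∀ (j : Fin 3) x, pd j (fun y => T y 0 1) x = -pd j (fun y => T y 1 0) x := by
    intro j x
    rw [pd_congr (f := fun y => T y 0 1) (g := fun y => -T y 1 0) (fun y => hs01 y) j x, pd_neg]
  have hp12 : ∀ (j : Fin 3) x, pd j (fun y => T y 1 2) x = -pd j (fun y => T y 2 1) x := by
    intro j x
    rw [pd_congr (f := fun y => T y 1 2) (g := fun y => -T y 2 1) (fun y => hs12 y) j x, pd_neg]
  have hp20 : ∀ (j : Fin 3) x, pd j (fun y => T y 2 0) x = -pd j (fun y => T y 0 2) x := by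
    intro j x
    rw [pd_congr (f := fun y => T y 2 0) (g := fun y => -T y 0 2) (fun y => hs20 y) j x, pd_neg]
  have hp11 : ∀ (j : Fin 3) x, pd j (fun y => T y 1 1) x = pd j (fun y => T y 0 0) x :=
    fun j x => pd_congr (fun y => hs11 y) j x
  have hp22 : ∀ (j : Fin 3) x, pd j (fun y => T y 2 2) x = pd j (fun y => T y 0 0) x :=
    fun j x => pd_congr (fun y => hs22 y) j x
  -- first-order consequences of dev curl T = 0
  have e1 : ∀ x, pd 2 (fun y => T y 0 0) x = pd 0 (fun y => T y 0 2) x := by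
    intro x
    have h := congrFun (congrFun (hdevcurl x) 0) 1
    simp [dev, curl3, Matrix.trace, Matrix.diag, Fin.sum_univ_three, Matrix.one_apply] at h
    linarith
  have e2 : ∀ x, pd 0 (fun y => T y 1 0) x = -pd 1 (fun y => T y 0 0) x := by
    intro x
    have h := congrFun (congrFun (hdevcurl x) 0) 2
    simp [dev, curl3, Matrix.trace, Matrix.diag, Fin.sum_univ_three, Matrix.one_apply] at h
    simp only [hp01] at h
    linarith
  have e3 : ∀ x, pd 1 (fun y => T y 2 1) x = -pd 2 (fun y => T y 0 0) x := by
    intro x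
    have h := congrFun (congrFun (hdevcurl x) 1) 0
    simp [dev, curl3, Matrix.trace, Matrix.diag, Fin.sum_univ_three, Matrix.one_apply] at h
    simp only [hp12, hp11] at h
    linarith
  have e4 : ∀ x, pd 0 (fun y => T y 0 0) x = pd 1 (fun y => T y 1 0) x := by
    intro x
    have h := congrFun (congrFun (hdevcurl x) 1) 2
    simp [dev, curl3, Matrix.trace, Matrix.diag, Fin.sum_univ_three, Matrix.one_apply] at h
    simp only [hp11] at h
    linarith
  have e5 : ∀ x, pd 1 (fun y => T y 0 0) x = pd 2 (fun y => T y 2 1) x := by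
    intro x
    have h := congrFun (congrFun (hdevcurl x) 2) 0
    simp [dev, curl3, Matrix.trace, Matrix.diag, Fin.sum_univ_three, Matrix.one_apply] at h
    simp only [hp22] at h
    linarith
  have e6 : ∀ x, pd 2 (fun y => T y 0 2) x = -pd 0 (fun y => T y 0 0) x := by
    intro x
    have h := congrFun (congrFun (hdevcurl x) 2) 1
    simp [dev, curl3, Matrix.trace, Matrix.diag, Fin.sum_univ_three, Matrix.one_apply] at h
    simp only [hp20, hp22] at h
    linarith
  have ediag : ∀ x, pd 0 (fun y => T y 2 1) x = pd 1 (fun y => T y 0 2) x ∧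
      pd 1 (fun y => T y 0 2) x = pd 2 (fun y => T y 1 0) x := by
    intro x
    have h0 := congrFun (congrFun (hdevcurl x) 0) 0
    have h1 := congrFun (congrFun (hdevcurl x) 1) 1
    have h2 := congrFun (congrFun (hdevcurl x) 2) 2
    simp [dev, curl3, Matrix.trace, Matrix.diag, Fin.sum_univ_three, Matrix.one_apply]
      at h0 h1 h2
    simp only [hp01, hp12, hp20, hp11, hp22] at h0 h1 h2
    constructor <;> linarith
  have e7 : ∀ x, pd 0 (fun y => T y 2 1) x = pd 1 (fun y => T y 0 2) x := fun x => (ediag x).1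
  have e8 : ∀ x, pd 1 (fun y => T y 0 2) x = pd 2 (fun y => T y 1 0) x := fun x => (ediag x).2
  -- function-level versions
  have f1 : pd 2 (fun y => T y 0 0) = pd 0 (fun y => T y 0 2) := funext e1
  have f2 : pd 0 (fun y => T y 1 0) = fun x => -pd 1 (fun y => T y 0 0) x := funext e2
  have f2' : pd 1 (fun y => T y 0 0) = fun x => -pd 0 (fun y => T y 1 0) x :=
    funext fun x => by have := e2 x; linarith
  have f3 : pd 2 (fun y => T y 0 0) = fun x => -pd 1 (fun y => T y 2 1) x :=
    funext fun x => by have := e3 x; linarith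
  have f3' : pd 1 (fun y => T y 2 1) = fun x => -pd 2 (fun y => T y 0 0) x := funext e3
  have f4 : pd 0 (fun y => T y 0 0) = pd 1 (fun y => T y 1 0) := funext e4
  have f5 : pd 1 (fun y => T y 0 0) = pd 2 (fun y => T y 2 1) := funext e5
  have f6 : pd 0 (fun y => T y 0 0) = fun x => -pd 2 (fun y => T y 0 2) x :=
    funext fun x => by have := e6 x; linarith
  have f7 : pd 0 (fun y => T y 2 1) = pd 1 (fun y => T y 0 2) := funext e7
  have f8 : pd 2 (fun y => T y 1 0) = pd 0 (fun y => T y 2 1) :=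
    funext fun x => ((e8 x).symm.trans (e7 x).symm)
  -- smoothness and supports of entries
  have hA : ContDiff ℝ (⊤ : ℕ∞) (fun y => T y 0 0) := entry_contDiff hT 0 0
  have ha1 : ContDiff ℝ (⊤ : ℕ∞) (fun y => T y 2 1) := entry_contDiff hT 2 1
  have ha2 : ContDiff ℝ (⊤ : ℕ∞) (fun y => T y 0 2) := entry_contDiff hT 0 2
  have ha3 : ContDiff ℝ (⊤ : ℕ∞) (fun y => T y 1 0) := entry_contDiff hT 1 0
  have sA : HasCompactSupport (fun y => T y 0 0) := entry_supp hsupp 0 0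
  have sa1 : HasCompactSupport (fun y => T y 2 1) := entry_supp hsupp 2 1
  have sa2 : HasCompactSupport (fun y => T y 0 2) := entry_supp hsupp 0 2
  have sa3 : HasCompactSupport (fun y => T y 1 0) := entry_supp hsupp 1 0
  -- pure second derivatives of A := T · 0 0
  have h01sum : ∀ x, pd 0 (pd 0 (fun y => T y 0 0)) x = -pd 1 (pd 1 (fun y => T y 0 0)) x := by
    intro x
    rw [f4, pd_comm ha3 0 1 x, f2, pd_neg]
  have h12sum : ∀ x, pd 1 (pd 1 (fun y => T y 0 0)) x = -pd 2 (pd 2 (fun y => T y 0 0)) x := by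
    intro x
    rw [f5, pd_comm ha1 1 2 x, f3', pd_neg]
  have h02sum : ∀ x, pd 0 (pd 0 (fun y => T y 0 0)) x = -pd 2 (pd 2 (fun y => T y 0 0)) x := by
    intro x
    rw [f6, pd_neg, pd_comm ha2 0 2 x, ← f1]
  have z00 : ∀ x, pd 0 (pd 0 (fun y => T y 0 0)) x = 0 := by
    intro x; have a := h01sum x; have b := h12sum x; have c := h02sum x; linarith
  have z11 : ∀ x, pd 1 (pd 1 (fun y => T y 0 0)) x = 0 := by
    intro x; have a := h01sum x; have b := h12sum x; have c := h02sum x; linarith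
  have z22 : ∀ x, pd 2 (pd 2 (fun y => T y 0 0)) x = 0 := by
    intro x; have a := h01sum x; have b := h12sum x; have c := h02sum x; linarith
  -- mixed second derivatives and gradient of s := pd 0 (T · 2 1)
  have m01 : ∀ x, pd 0 (pd 1 (fun y => T y 0 0)) x = pd 2 (pd 0 (fun y => T y 2 1)) x := by
    intro x
    rw [f5]
    exact pd_comm ha1 0 2 x
  have m01' : ∀ x, pd 1 (pd 0 (fun y => T y 0 0)) x = -pd 2 (pd 0 (fun y => T y 2 1)) x := by
    intro x
    rw [f6, pd_neg, pd_comm ha2 1 2 x, ← f7]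
  have hsg2 : ∀ x, pd 2 (pd 0 (fun y => T y 2 1)) x = 0 := by
    intro x
    have hc := pd_comm hA 0 1 x
    rw [m01 x, m01' x] at hc
    linarith
  have z01 : ∀ x, pd 0 (pd 1 (fun y => T y 0 0)) x = 0 :=
    fun x => (m01 x).trans (hsg2 x)
  have z10 : ∀ x, pd 1 (pd 0 (fun y => T y 0 0)) x = 0 :=
    fun x => (m01' x).trans (by rw [hsg2 x, neg_zero])
  have m12 : ∀ x, pd 1 (pd 2 (fun y => T y 0 0)) x = pd 0 (pd 0 (fun y => T y 2 1)) x := by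
    intro x
    rw [f1, pd_comm ha2 1 0 x, ← f7]
  have m12' : ∀ x, pd 2 (pd 1 (fun y => T y 0 0)) x = -pd 0 (pd 0 (fun y => T y 2 1)) x := by
    intro x
    rw [f2', pd_neg, pd_comm ha3 2 0 x, f8]
  have hsg0 : ∀ x, pd 0 (pd 0 (fun y => T y 2 1)) x = 0 := by
    intro x
    have hc := pd_comm hA 1 2 x
    rw [m12 x, m12' x] at hc
    linarith
  have z12 : ∀ x, pd 1 (pd 2 (fun y => T y 0 0)) x = 0 :=
    fun x => (m12 x).trans (hsg0 x)
  have z21 : ∀ x, pd 2 (pd 1 (fun y => T y 0 0)) x = 0 :=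
    fun x => (m12' x).trans (by rw [hsg0 x, neg_zero])
  have m02 : ∀ x, pd 0 (pd 2 (fun y => T y 0 0)) x = -pd 1 (pd 0 (fun y => T y 2 1)) x := by
    intro x
    rw [f3, pd_neg, pd_comm ha1 0 1 x]
  have m02' : ∀ x, pd 2 (pd 0 (fun y => T y 0 0)) x = pd 1 (pd 0 (fun y => T y 2 1)) x := by
    intro x
    rw [f4, pd_comm ha3 2 1 x, f8]
  have hsg1 : ∀ x, pd 1 (pd 0 (fun y => T y 2 1)) x = 0 := by
    intro x
    have hc := pd_comm hA 0 2 x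
    rw [m02 x, m02' x] at hc
    linarith
  have z02 : ∀ x, pd 0 (pd 2 (fun y => T y 0 0)) x = 0 :=
    fun x => (m02 x).trans (by rw [hsg1 x, neg_zero])
  have z20 : ∀ x, pd 2 (pd 0 (fun y => T y 0 0)) x = 0 :=
    fun x => (m02' x).trans (hsg1 x)
  -- s := pd 0 (T · 2 1) vanishes
  have hszero : ∀ x, pd 0 (fun y => T y 2 1) x = 0 := by
    apply zero_of_pd ((pd_smooth ha1 0).differentiable (by simp)) (pd_compactSupport sa1 0)
    intro x j
    fin_cases j
    · exact hsg0 x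
    · exact hsg1 x
    · exact hsg2 x
  -- partial derivatives of A vanish
  have hA0 : ∀ x, pd 0 (fun y => T y 0 0) x = 0 := by
    apply zero_of_pd ((pd_smooth hA 0).differentiable (by simp)) (pd_compactSupport sA 0)
    intro x i
    fin_cases i
    · exact z00 x
    · exact z10 x
    · exact z20 x
  have hA1 : ∀ x, pd 1 (fun y => T y 0 0) x = 0 := by
    apply zero_of_pd ((pd_smooth hA 1).differentiable (by simp)) (pd_compactSupport sA 1)
    intro x i
    fin_cases i
    · exact z01 x
    · exact z11 x
    · exact z21 x
  have hA2 : ∀ x, pd 2 (fun y => T y 0 0) x = 0 := by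
    apply zero_of_pd ((pd_smooth hA 2).differentiable (by simp)) (pd_compactSupport sA 2)
    intro x i
    fin_cases i
    · exact z02 x
    · exact z12 x
    · exact z22 x
  -- the entries themselves vanish
  have hAzero : ∀ x, T x 0 0 = 0 := by
    apply zero_of_pd (hA.differentiable (by simp)) sA
    intro x j
    fin_cases j
    · exact hA0 x
    · exact hA1 x
    · exact hA2 x
  have ha1zero : ∀ x, T x 2 1 = 0 := by
    apply zero_of_pd (ha1.differentiable (by simp)) sa1
    intro x j
    fin_cases j
    · exact hszero x
    · exact (e3 x).trans (by rw [hA2 x, neg_zero])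
    · exact (e5 x).symm.trans (hA1 x)
  have ha2zero : ∀ x, T x 0 2 = 0 := by
    apply zero_of_pd (ha2.differentiable (by simp)) sa2
    intro x j
    fin_cases j
    · exact (e1 x).symm.trans (hA2 x)
    · exact (e7 x).symm.trans (hszero x)
    · exact (e6 x).trans (by rw [hA0 x, neg_zero])
  have ha3zero : ∀ x, T x 1 0 = 0 := by
    apply zero_of_pd (ha3.differentiable (by simp)) sa3
    intro x j
    fin_cases j
    · exact (e2 x).trans (by rw [hA1 x, neg_zero])
    · exact (e4 x).symm.trans (hA0 x)
    · exact (congrFun f8 x).trans (hszero x)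
  -- conclude
  intro x
  ext i j
  fin_cases i <;> fin_cases j
  · exact hAzero x
  · exact (hs01 x).trans (by rw [ha3zero x, neg_zero]; rfl)
  · exact ha2zero x
  · exact ha3zero x
  · exact (hs11 x).trans (hAzero x)
  · exact (hs12 x).trans (by rw [ha1zero x, neg_zero]; rfl)
  · exact (hs20 x).trans (by rw [ha2zero x, neg_zero]; rfl)
  · exact ha1zero x
  · exact (hs22 x).trans (hAzero x)
end
end

section
/- Let n ≥ 3, let Ω ⊂ ℝⁿ be a nonempty connected open set, and let v : Ω → ℝⁿ be a smooth vector field with dev sym Grad v = 0 on Ω. Then there exist a vector w̄ ∈ ℝⁿ, a real number ū ∈ ℝ and a skew-symmetric matrix Ā ∈ ℝ^{n×n} such that for all x ∈ Ω: Grad v(x) = u(x)·Id + A(x), where u(x) = ⟨w̄, x⟩ + ū and A(x) is the skew-symmetric matrix with entries A(x)ᵢⱼ = w̄ⱼxᵢ − w̄ᵢxⱼ + Āᵢⱼ. (Representation formula for the gradient, the Appendix, formulas (4.4)–(4.6).) -/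
open MeasureTheory Real Matrix

attribute [local instance] Matrix.frobeniusNormedAddCommGroup Matrix.frobeniusNormedSpace

noncomputable section

section Aux

variable {n : ℕ} {f g : (Fin n → ℝ) → ℝ} {x : Fin n → ℝ}

lemma pd_congr_nhds (h : f =ᶠ[nhds x] g) (j : Fin n) : pd j f x = pd j g x := by
  unfold pd; rw [h.fderiv_eq]

lemma contDiffAt_pd (hf : ContDiffAt ℝ (⊤ : ℕ∞) f x) (j : Fin n) : ContDiffAt ℝ (⊤ : ℕ∞) (pd j f) x := by
  have h1 : ContDiffAt ℝ (⊤ : ℕ∞) (fderiv ℝ f) x := hf.fderiv_right (by simp)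
  exact (ContinuousLinearMap.apply ℝ ℝ
    (Pi.single (M := fun _ : Fin n => ℝ) j 1)).contDiff.contDiffAt.comp x h1

lemma differentiableAt_pd (hf : ContDiffAt ℝ (⊤ : ℕ∞) f x) (j : Fin n) :
    DifferentiableAt ℝ (pd j f) x :=
  (contDiffAt_pd hf j).differentiableAt (by simp)

lemma pd_comm_s15 (hf : ∀ᶠ y in nhds x, ContDiffAt ℝ (⊤ : ℕ∞) f y) (a b : Fin n) :
    pd a (pd b f) x = pd b (pd a f) x := by
  have hx : ContDiffAt ℝ (⊤ : ℕ∞) f x := hf.self_of_nhds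
  have hev : ∀ᶠ y in nhds x, HasFDerivAt f (fderiv ℝ f y) y :=
    hf.mono fun y hy => (hy.differentiableAt (by simp)).hasFDerivAt
  have hf' : ContDiffAt ℝ (⊤ : ℕ∞) (fderiv ℝ f) x := hx.fderiv_right (by simp)
  have h2 : HasFDerivAt (fderiv ℝ f) (fderiv ℝ (fderiv ℝ f) x) x :=
    (hf'.differentiableAt (by simp)).hasFDerivAt
  have hsymm := second_derivative_symmetric_of_eventually hev h2
  have key : ∀ c d : Fin n,
      pd c (pd d f) x
        = fderiv ℝ (fderiv ℝ f) x (Pi.single c 1) (Pi.single d 1) := by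
    intro c d
    have h3 : HasFDerivAt (fun y => fderiv ℝ f y (Pi.single d 1))
        ((ContinuousLinearMap.apply ℝ ℝ (Pi.single (M := fun _ : Fin n => ℝ) d 1)).comp
          (fderiv ℝ (fderiv ℝ f) x)) x :=
      (ContinuousLinearMap.apply ℝ ℝ
        (Pi.single (M := fun _ : Fin n => ℝ) d 1)).hasFDerivAt.comp x h2
    show fderiv ℝ (fun y => fderiv ℝ f y (Pi.single d 1)) x (Pi.single c 1) = _
    rw [h3.fderiv]
    rfl
  rw [key a b, key b a, hsymm]

lemma pd_add (hf : DifferentiableAt ℝ f x) (hg : DifferentiableAt ℝ g x) (j : Fin n) :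
    pd j (fun y => f y + g y) x = pd j f x + pd j g x := by
  unfold pd; rw [fderiv_fun_add hf hg]; simp

lemma pd_sub (hf : DifferentiableAt ℝ f x) (hg : DifferentiableAt ℝ g x) (j : Fin n) :
    pd j (fun y => f y - g y) x = pd j f x - pd j g x := by
  unfold pd; rw [fderiv_fun_sub hf hg]; simp

lemma pd_const_mul (hf : DifferentiableAt ℝ f x) (c : ℝ) (j : Fin n) :
    pd j (fun y => c * f y) x = c * pd j f x := by
  unfold pd; rw [fderiv_const_mul hf c]; simp

lemma pd_sum {ι : Type*} (s : Finset ι) (F : ι → (Fin n → ℝ) → ℝ)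
    (h : ∀ i ∈ s, DifferentiableAt ℝ (F i) x) (j : Fin n) :
    pd j (fun y => ∑ i ∈ s, F i y) x = ∑ i ∈ s, pd j (F i) x := by
  unfold pd; rw [fderiv_fun_sum h]; simp

lemma pd_coord (i j : Fin n) : pd j (fun y => y i) x = if j = i then 1 else 0 := by
  have h : fderiv ℝ (fun y : Fin n → ℝ => y i) x
      = ContinuousLinearMap.proj (R := ℝ) (φ := fun _ : Fin n => ℝ) i :=
    (ContinuousLinearMap.proj (R := ℝ) (φ := fun _ : Fin n => ℝ) i).fderiv (x := x)
  unfold pd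
  rw [h]
  rcases eq_or_ne j i with h' | h'
  · simp [h']
  · simp [Pi.single_apply, h', Ne.symm h']

lemma iteflip (p q : Fin n) : (if p = q then (1:ℝ) else 0) = if q = p then 1 else 0 := by
  by_cases h : p = q
  · simp [h]
  · simp [h, Ne.symm h]

lemma exists_third (hn : 3 ≤ n) (a b : Fin n) : ∃ c, c ≠ a ∧ c ≠ b := by
  by_contra h
  push_neg at h
  have hsub : (Finset.univ : Finset (Fin n)) ⊆ {a, b} := by
    intro c _
    simp only [Finset.mem_insert, Finset.mem_singleton]
    by_cases hc : c = a
    · exact Or.inl hc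
    · exact Or.inr (h c hc)
  have h1 := Finset.card_le_card hsub
  have h2 : ({a, b} : Finset (Fin n)).card ≤ 2 :=
    (Finset.card_insert_le _ _).trans (by simp)
  simp [Finset.card_univ] at h1
  omega

lemma const_of_pd_zero {Ω : Set (Fin n → ℝ)} (ho : IsOpen Ω) (hc : IsPreconnected Ω)
    {f : (Fin n → ℝ) → ℝ} (hd : ∀ z ∈ Ω, DifferentiableAt ℝ f z)
    (hz : ∀ z ∈ Ω, ∀ j, pd j f z = 0) {x y : Fin n → ℝ} (hx : x ∈ Ω) (hy : y ∈ Ω) :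
    f x = f y := by
  have hzero : ∀ z ∈ Ω, fderiv ℝ f z = 0 := by
    intro z hzΩ
    ext m
    have hz' : ∀ i : Fin n, fderiv ℝ f z (Pi.single i 1) = 0 := fun i => hz z hzΩ i
    have hm : m = ∑ i : Fin n, (m i) • Pi.single (M := fun _ : Fin n => ℝ) i 1 := by
      have h1 : ∀ i : Fin n, (m i) • Pi.single (M := fun _ : Fin n => ℝ) i 1
          = Pi.single i (m i) := by
        intro i
        rw [← Pi.single_smul]
        simp
      simp_rw [h1]
      exact (Finset.univ_sum_single m).symm
    rw [hm, map_sum]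
    simp [hz']
  by_contra hne
  have hloc : ∀ z ∈ Ω, ∀ᶠ p in nhds z, f p = f z := by
    intro z hz'
    obtain ⟨ε, hε, hball⟩ := Metric.isOpen_iff.1 ho z hz'
    have hcon : ∀ p ∈ Metric.ball z ε, f p = f z := by
      intro p hp
      exact (convex_ball z ε).is_const_of_fderivWithin_eq_zero
        (fun q hq => (hd q (hball hq)).differentiableWithinAt)
        (fun q hq => by
          rw [fderivWithin_of_isOpen Metric.isOpen_ball hq]
          exact hzero q (hball hq))
        hp (Metric.mem_ball_self hε)
    exact Filter.eventually_of_mem (Metric.ball_mem_nhds z hε) hcon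
  set S := {z | z ∈ Ω ∧ f z = f y} with hS
  set T := {z | z ∈ Ω ∧ f z ≠ f y} with hT
  have hSopen : IsOpen S := by
    rw [isOpen_iff_mem_nhds]
    intro z hzS
    have h1 := hloc z hzS.1
    have h2 : ∀ᶠ p in nhds z, p ∈ Ω := by
      filter_upwards [ho.mem_nhds hzS.1] with p hp using hp
    filter_upwards [h1, h2] with p hp1 hp2
    exact ⟨hp2, by rw [hp1]; exact hzS.2⟩
  have hTopen : IsOpen T := by
    rw [isOpen_iff_mem_nhds]
    intro z hzS
    have h1 := hloc z hzS.1
    have h2 : ∀ᶠ p in nhds z, p ∈ Ω := by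
      filter_upwards [ho.mem_nhds hzS.1] with p hp using hp
    filter_upwards [h1, h2] with p hp1 hp2
    exact ⟨hp2, by rw [hp1]; exact hzS.2⟩
  have hcov : Ω ⊆ S ∪ T := by
    intro z hz'
    by_cases h : f z = f y
    · exact Or.inl ⟨hz', h⟩
    · exact Or.inr ⟨hz', h⟩
  have hSne : (Ω ∩ S).Nonempty := ⟨y, hy, hy, rfl⟩
  have hTne : (Ω ∩ T).Nonempty := ⟨x, hx, hx, hne⟩
  obtain ⟨p, -, hpS, hpT⟩ := hc S T hSopen hTopen hcov hSne hTne
  exact hpT.2 hpS.2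

end Aux

/-- Representation formula for the gradient of a conformal Killing vector
(Appendix, formulas (4.4)–(4.6)). -/
theorem conformal_killing_gradient_representation (n : ℕ) (hn : 3 ≤ n)
    (Ω : Set (Fin n → ℝ)) (hne : Ω.Nonempty) (ho : IsOpen Ω) (hconn : IsConnected Ω)
    (v : (Fin n → ℝ) → (Fin n → ℝ)) (hv : ContDiffOn ℝ (⊤ : ℕ∞) v Ω)
    (hker : ∀ x ∈ Ω, dev (symP (gradM v x)) = 0) :
    ∃ (w : Fin n → ℝ) (u : ℝ) (A : Matrix (Fin n) (Fin n) ℝ),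
      Aᵀ = -A ∧
      ∀ x ∈ Ω,
        gradM v x = ((∑ i, w i * x i) + u) • (1 : Matrix (Fin n) (Fin n) ℝ)
            + Matrix.of (fun i j => w j * x i - w i * x j + A i j) := by
  classical
  obtain ⟨x₀, hx₀⟩ := hne
  have hevΩ : ∀ x ∈ Ω, ∀ᶠ y in nhds x, y ∈ Ω := by
    intro x hx
    filter_upwards [ho.mem_nhds hx] with y hy using hy
  have hV : ∀ (i : Fin n), ∀ x ∈ Ω, ContDiffAt ℝ (⊤ : ℕ∞) (fun y => v y i) x := by
    intro i x hx
    have h1 : ContDiffAt ℝ (⊤ : ℕ∞) v x := hv.contDiffAt (ho.mem_nhds hx)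
    exact ((ContinuousLinearMap.proj (R := ℝ) (φ := fun _ : Fin n => ℝ)
      i).contDiff.contDiffAt).comp x h1
  have hdc : ∀ (x : Fin n → ℝ) (i : Fin n), DifferentiableAt ℝ (fun y : Fin n → ℝ => y i) x :=
    fun x i => (ContinuousLinearMap.proj (R := ℝ) (φ := fun _ : Fin n => ℝ) i).differentiableAt
  set U : (Fin n → ℝ) → ℝ := fun x => (∑ i, pd i (fun y => v y i) x) / n with hUdef
  have hUc : ∀ x ∈ Ω, ContDiffAt ℝ (⊤ : ℕ∞) U x := by
    intro x hx
    have h1 : ContDiffAt ℝ (⊤ : ℕ∞) (fun z => ∑ i, pd i (fun y => v y i) z) x :=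
      ContDiffAt.sum fun i _ => contDiffAt_pd (hV i x hx) i
    exact h1.div_const n
  have hn0 : (n : ℝ) ≠ 0 := Nat.cast_ne_zero.mpr (by omega)
  -- the pointwise symmetry relation
  have hsym : ∀ x ∈ Ω, ∀ i j : Fin n,
      pd j (fun y => v y i) x + pd i (fun y => v y j) x
        = (2 * (if i = j then 1 else 0)) * U x := by
    intro x hx i j
    have h0 := hker x hx
    unfold dev at h0
    have h1 : symP (gradM v x)
        = (Matrix.trace (symP (gradM v x)) / (n : ℝ)) • (1 : Matrix (Fin n) (Fin n) ℝ) :=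
      sub_eq_zero.1 h0
    have h2 : Matrix.trace (symP (gradM v x)) = ∑ k, pd k (fun y => v y k) x := by
      have hd : ∀ k, symP (gradM v x) k k = pd k (fun y => v y k) x := by
        intro k
        simp [symP, gradM, Matrix.transpose_apply, Matrix.add_apply, Matrix.smul_apply]
        ring
      simp [Matrix.trace, Matrix.diag, hd]
    have h3 := Matrix.ext_iff.mpr h1 i j
    have h4 : symP (gradM v x) i j
        = (1/2) * (pd j (fun y => v y i) x + pd i (fun y => v y j) x) := by
      simp [symP, gradM, Matrix.transpose_apply, Matrix.add_apply, Matrix.smul_apply]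
    have h5 : ((Matrix.trace (symP (gradM v x)) / (n : ℝ)) •
        (1 : Matrix (Fin n) (Fin n) ℝ)) i j
        = (Matrix.trace (symP (gradM v x)) / (n : ℝ)) * (if i = j then 1 else 0) := by
      by_cases h : i = j <;> simp [Matrix.smul_apply, Matrix.one_apply, h]
    rw [h4, h5, h2] at h3
    have hU' : U x = (∑ k, pd k (fun y => v y k) x) / n := by rw [hUdef]
    rw [hU']
    by_cases hij : i = j
    · rw [if_pos hij] at h3 ⊢
      linarith [h3]
    · rw [if_neg hij] at h3 ⊢
      linarith [h3]
  -- second derivative formula (*)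
  have hstar : ∀ x ∈ Ω, ∀ a b c : Fin n,
      pd a (fun y => pd b (fun z => v z c) y) x
        = (if b = c then 1 else 0) * pd a U x + (if a = c then 1 else 0) * pd b U x
          - (if a = b then 1 else 0) * pd c U x := by
    intro x hx a b c
    have hevV : ∀ c' : Fin n, ∀ᶠ y in nhds x, ContDiffAt ℝ (⊤ : ℕ∞) (fun z => v z c') y :=
      fun c' => (hevΩ x hx).mono fun y hy => hV c' y hy
    have hstep : ∀ κ α β : Fin n,
        pd κ (fun y => pd α (fun z => v z β) y) x
          + pd κ (fun y => pd β (fun z => v z α) y) x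
          = (2 * (if β = α then 1 else 0)) * pd κ U x := by
      intro κ α β
      have hee : (fun y => pd α (fun z => v z β) y + pd β (fun z => v z α) y)
          =ᶠ[nhds x] (fun y => (2 * (if β = α then 1 else 0)) * U y) :=
        (hevΩ x hx).mono fun y hy => hsym y hy β α
      have h1 := pd_congr_nhds hee κ
      rw [pd_add (differentiableAt_pd (hV β x hx) α)
        (differentiableAt_pd (hV α x hx) β) κ] at h1
      rw [pd_const_mul ((hUc x hx).differentiableAt (by simp)) _ κ] at h1
      exact h1
    have e1 := hstep a b c
    have e2 := hstep b a c
    have e3 := hstep c a b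
    have s1 := pd_comm_s15 (hevV c) a b
    have s2 := pd_comm_s15 (hevV b) a c
    have s3 := pd_comm_s15 (hevV a) b c
    rw [iteflip b c, iteflip a c, iteflip a b]
    linarith [e1, e2, e3, s1, s2, s3]
  -- Hessian of U vanishes
  have hH : ∀ x ∈ Ω, ∀ a b : Fin n, pd a (pd b U) x = 0 := by
    have hkey : ∀ x ∈ Ω, ∀ i j k l : Fin n,
        (if j = k then (1:ℝ) else 0) * pd l (pd i U) x
          + (if i = k then (1:ℝ) else 0) * pd l (pd j U) x
          - (if i = j then (1:ℝ) else 0) * pd l (pd k U) x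
        = (if j = k then (1:ℝ) else 0) * pd i (pd l U) x
          + (if l = k then (1:ℝ) else 0) * pd i (pd j U) x
          - (if l = j then (1:ℝ) else 0) * pd i (pd k U) x := by
      intro x hx i j k l
      have hdq : ∀ y ∈ Ω, ∀ a : Fin n, DifferentiableAt ℝ (pd a U) y :=
        fun y hy a => differentiableAt_pd (hUc y hy) a
      have hee : (fun y => pd i (fun z => pd j (fun z' => v z' k) z) y)
          =ᶠ[nhds x] (fun y => (if j = k then (1:ℝ) else 0) * pd i U y
            + (if i = k then (1:ℝ) else 0) * pd j U y
            - (if i = j then (1:ℝ) else 0) * pd k U y) :=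
        (hevΩ x hx).mono fun y hy => hstar y hy i j k
      have hee2 : (fun y => pd l (fun z => pd j (fun z' => v z' k) z) y)
          =ᶠ[nhds x] (fun y => (if j = k then (1:ℝ) else 0) * pd l U y
            + (if l = k then (1:ℝ) else 0) * pd j U y
            - (if l = j then (1:ℝ) else 0) * pd k U y) :=
        (hevΩ x hx).mono fun y hy => hstar y hy l j k
      have hfev : ∀ᶠ y in nhds x, ContDiffAt ℝ (⊤ : ℕ∞) (pd j (fun z' => v z' k)) y :=
        (hevΩ x hx).mono fun y hy => contDiffAt_pd (hV k y hy) j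
      have hswap := pd_comm_s15 hfev l i
      have hL : pd l (fun y => pd i (fun z => pd j (fun z' => v z' k) z) y) x
          = (if j = k then (1:ℝ) else 0) * pd l (pd i U) x
            + (if i = k then (1:ℝ) else 0) * pd l (pd j U) x
            - (if i = j then (1:ℝ) else 0) * pd l (pd k U) x := by
        rw [pd_congr_nhds hee l,
          pd_sub (((hdq x hx i).const_mul _).fun_add ((hdq x hx j).const_mul _))
            ((hdq x hx k).const_mul _) l,
          pd_add ((hdq x hx i).const_mul _) ((hdq x hx j).const_mul _) l,
          pd_const_mul (hdq x hx i) _ l, pd_const_mul (hdq x hx j) _ l,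
          pd_const_mul (hdq x hx k) _ l]
      have hR : pd i (fun y => pd l (fun z => pd j (fun z' => v z' k) z) y) x
          = (if j = k then (1:ℝ) else 0) * pd i (pd l U) x
            + (if l = k then (1:ℝ) else 0) * pd i (pd j U) x
            - (if l = j then (1:ℝ) else 0) * pd i (pd k U) x := by
        rw [pd_congr_nhds hee2 i,
          pd_sub (((hdq x hx l).const_mul _).fun_add ((hdq x hx j).const_mul _))
            ((hdq x hx k).const_mul _) i,
          pd_add ((hdq x hx l).const_mul _) ((hdq x hx j).const_mul _) i,
          pd_const_mul (hdq x hx l) _ i, pd_const_mul (hdq x hx j) _ i,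
          pd_const_mul (hdq x hx k) _ i]
      rw [← hL, ← hR]
      exact hswap
    intro x hx a b
    obtain ⟨c, hca, hcb⟩ := exists_third hn a b
    by_cases hab : a = b
    · subst hab
      obtain ⟨d, hda, hdc⟩ := exists_third hn a c
      have h1 := hkey x hx c a c a
      have h2 := hkey x hx d a d a
      have h3 := hkey x hx d c d c
      simp [hca, Ne.symm hca, hda, Ne.symm hda, hdc, Ne.symm hdc] at h1 h2 h3
      linarith [h1, h2, h3]
    · have h1 := hkey x hx c b c a
      simp [hab, hcb, Ne.symm hcb, hca, Ne.symm hca] at h1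
      linarith [h1]
  -- the gradient of U is a constant vector w
  set w : Fin n → ℝ := fun b => pd b U x₀ with hwdef
  have hwconst : ∀ b : Fin n, ∀ x ∈ Ω, pd b U x = w b := by
    intro b x hx
    exact const_of_pd_zero ho hconn.isPreconnected
      (fun z hz => differentiableAt_pd (hUc z hz) b)
      (fun z hz j => hH z hz j b) hx hx₀
  -- U is affine
  have hlin_diff : ∀ (x : Fin n → ℝ),
      DifferentiableAt ℝ (fun y : Fin n → ℝ => ∑ i, w i * y i) x := by
    intro x
    exact DifferentiableAt.fun_sum fun i _ => (hdc x i).const_mul (w i)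
  have hlin_pd : ∀ (x : Fin n → ℝ) (j : Fin n),
      pd j (fun y : Fin n → ℝ => ∑ i, w i * y i) x = w j := by
    intro x j
    rw [pd_sum Finset.univ (fun i => fun y => w i * y i)
      (fun i _ => (hdc x i).const_mul (w i)) j]
    have h1 : ∀ i : Fin n, pd j (fun y : Fin n → ℝ => w i * y i) x
        = w i * (if j = i then 1 else 0) := by
      intro i
      rw [pd_const_mul (hdc x i) (w i) j, pd_coord]
    simp [h1]
  set u0 : ℝ := U x₀ - ∑ i, w i * x₀ i with hu0
  have hUaff : ∀ x ∈ Ω, U x = (∑ i, w i * x i) + u0 := by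
    intro x hx
    have h := const_of_pd_zero (f := fun y => U y - ∑ i, w i * y i) ho
      hconn.isPreconnected
      (fun z hz => ((hUc z hz).differentiableAt (by simp)).sub (hlin_diff z))
      (fun z hz j => by
        rw [pd_sub ((hUc z hz).differentiableAt (by simp)) (hlin_diff z) j,
          hlin_pd z j, hwconst j z hz, sub_self])
      hx hx₀
    have h' : U x - ∑ i, w i * x i = U x₀ - ∑ i, w i * x₀ i := h
    rw [hu0]
    linarith [h']
  -- the skew part is affine with the prescribed derivative
  set Abar : Matrix (Fin n) (Fin n) ℝ := Matrix.of fun i j =>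
    pd j (fun y => v y i) x₀ - U x₀ * (if i = j then 1 else 0)
      - (w j * x₀ i - w i * x₀ j) with hAdef
  have hAbar : ∀ (i j : Fin n), Abar i j
      = pd j (fun y => v y i) x₀ - U x₀ * (if i = j then 1 else 0)
        - (w j * x₀ i - w i * x₀ j) := fun i j => rfl
  have hFconst : ∀ (i j : Fin n), ∀ x ∈ Ω,
      pd j (fun y => v y i) x - U x * (if i = j then 1 else 0)
        - (w j * x i - w i * x j) = Abar i j := by
    intro i j x hx
    rw [hAbar]
    refine const_of_pd_zero (f := fun y => pd j (fun z => v z i) y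
      - U y * (if i = j then 1 else 0) - (w j * y i - w i * y j)) ho
      hconn.isPreconnected ?_ ?_ hx hx₀
    · intro z hz
      refine DifferentiableAt.sub (DifferentiableAt.sub ?_ ?_) (DifferentiableAt.sub ?_ ?_)
      · exact differentiableAt_pd (hV i z hz) j
      · exact ((hUc z hz).differentiableAt (by simp)).mul_const _
      · exact (hdc z i).const_mul (w j)
      · exact (hdc z j).const_mul (w i)
    · intro z hz k
      have hmc : (fun y => U y * (if i = j then (1:ℝ) else 0))
          = fun y => (if i = j then (1:ℝ) else 0) * U y := by
        funext y; ring
      rw [pd_sub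
        (DifferentiableAt.fun_sub (differentiableAt_pd (hV i z hz) j)
          (((hUc z hz).differentiableAt (by simp)).mul_const _))
        (DifferentiableAt.fun_sub ((hdc z i).const_mul (w j))
          ((hdc z j).const_mul (w i))) k,
        pd_sub (differentiableAt_pd (hV i z hz) j)
          (((hUc z hz).differentiableAt (by simp)).mul_const _) k,
        pd_sub ((hdc z i).const_mul (w j)) ((hdc z j).const_mul (w i)) k]
      rw [hmc, pd_const_mul ((hUc z hz).differentiableAt (by simp)) _ k]
      rw [pd_const_mul (hdc z i) (w j) k]
      rw [pd_const_mul (hdc z j) (w i) k]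
      rw [pd_coord, pd_coord]
      have hst := hstar z hz k j i
      rw [hst, hwconst i z hz, hwconst j z hz, hwconst k z hz, iteflip j i]
      ring
  refine ⟨w, u0, Abar, ?_, ?_⟩
  · ext i j
    rw [Matrix.transpose_apply, Matrix.neg_apply, hAbar, hAbar]
    have h := hsym x₀ hx₀ i j
    by_cases hij : i = j
    · subst hij
      simp only [if_pos rfl] at h ⊢
      linarith [h]
    · simp only [if_neg hij, if_neg (Ne.symm hij)] at h ⊢
      linarith [h]
  · intro x hx
    ext i j
    have hF := hFconst i j x hx
    have hU := hUaff x hx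
    rw [Matrix.add_apply, Matrix.smul_apply, Matrix.one_apply, Matrix.of_apply,
      smul_eq_mul]
    show pd j (fun y => v y i) x = _
    by_cases hij : i = j
    · rw [if_pos hij] at hF ⊢
      linarith [hF, hU]
    · rw [if_neg hij] at hF ⊢
      linarith [hF, hU]
end
end
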